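/- Let x ∈ X be neither a loop nor a coloop. Then the sequence 0 → 𝒫(X∖x) → 𝒫(X) → 𝒫(X/x) → 0 is exact, where the first map is multiplication by p_x and the second is the restriction to 𝒫(X) of Sym(π_x): multiplication by p_x maps 𝒫(X∖x) injectively into 𝒫(X), Sym(π_x) maps 𝒫(X) onto 𝒫(X/x), and the kernel of Sym(π_x) restricted to 𝒫(X) equals p_x·𝒫(X∖x). -/

import Mathlib

noncomputable section

variable {r N : ℕ}

/-- `p_u`, the degree-one polynomial associated with the vector `u ∈ ℝ^r`. -/
def linPoly {r : ℕ} (u : Fin r → ℝ) : MvPolynomial (Fin r) ℝ :=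
  ∑ i, MvPolynomial.C (u i) * MvPolynomial.X i

/-- `p_Y = ∏_{i ∈ Y} p_{X i}` for a sublist `Y` of the list `X`. -/
def prodPoly {r N : ℕ} (X : Fin N → Fin r → ℝ) (Y : Finset (Fin N)) : MvPolynomial (Fin r) ℝ :=
  ∏ i ∈ Y, linPoly (X i)

/-- The pairing `⟨p, f⟩ = (p(∂/∂t₁,…,∂/∂t_r) f)(0)`, written via coefficients:
`⟨p,f⟩ = ∑_α α! · p_α · f_α`. -/
def pairing {r : ℕ} (p f : MvPolynomial (Fin r) ℝ) : ℝ :=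
  ∑ α ∈ p.support, (∏ i, ((α i).factorial : ℝ)) * p.coeff α * f.coeff α

lemma pairing_zero {r : ℕ} (q : MvPolynomial (Fin r) ℝ) : pairing q 0 = 0 := by
  simp [pairing]

lemma pairing_add {r : ℕ} (q f g : MvPolynomial (Fin r) ℝ) :
    pairing q (f + g) = pairing q f + pairing q g := by
  unfold pairing
  rw [← Finset.sum_add_distrib]
  exact Finset.sum_congr rfl fun α _ => by rw [MvPolynomial.coeff_add]; ring

lemma pairing_smul {r : ℕ} (q : MvPolynomial (Fin r) ℝ) (c : ℝ) (f : MvPolynomial (Fin r) ℝ) :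
    pairing q (c • f) = c * pairing q f := by
  unfold pairing
  rw [Finset.mul_sum]
  exact Finset.sum_congr rfl fun α _ => by rw [MvPolynomial.coeff_smul, smul_eq_mul]; ring

/-- The kernel (Macaulay inverse system) of an ideal `I`:
all polynomials annihilated (in the sense of the pairing) by every element of `I`. -/
def kerIdeal {r : ℕ} (I : Ideal (MvPolynomial (Fin r) ℝ)) :
    Submodule ℝ (MvPolynomial (Fin r) ℝ) where
  carrier := {f | ∀ q ∈ I, pairing q f = 0}
  add_mem' := fun hf hg q hq => by
    rw [pairing_add, hf q hq, hg q hq, add_zero]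
  zero_mem' := fun q _ => pairing_zero q
  smul_mem' := fun c f hf q hq => by
    rw [pairing_smul, hf q hq, mul_zero]

section Lists

variable {M : Type*} [AddCommGroup M] [Module ℝ M]

/-- `B ⊆ G` is (the index set of) a sublist of the list `v` restricted to the ground set `G`
that is a basis of the ambient space. -/
def basesOn (v : Fin N → M) (G : Finset (Fin N)) : Set (Finset (Fin N)) :=
  {B | B ⊆ G ∧ LinearIndependent ℝ ((B : Set (Fin N)).restrict v) ∧
    Submodule.span ℝ (v '' (B : Set (Fin N))) = ⊤}

/-- `j` is externally active with respect to the basis `B`: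
`v j ∈ span {v e : e ∈ B, e ≤ j}` and `j ∉ B`. -/
def isExtActive (v : Fin N → M) (B : Finset (Fin N)) (j : Fin N) : Prop :=
  j ∉ B ∧ v j ∈ Submodule.span ℝ (v '' {e : Fin N | e ∈ B ∧ e ≤ j})

open Classical in
/-- The set `E(B)` of externally active elements (within the ground set `G`). -/
def extSetOn (v : Fin N → M) (G B : Finset (Fin N)) : Finset (Fin N) :=
  G.filter (fun j => isExtActive v B j)

/-- `C` is a cocircuit w.r.t. the collection of bases `𝔅`: an inclusion-minimal
sublist of the ground set `G` intersecting every basis in `𝔅`. -/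
def isCocircuitOn (G : Finset (Fin N)) (𝔅 : Set (Finset (Fin N))) (C : Finset (Fin N)) : Prop :=
  C ⊆ G ∧ (∀ B ∈ 𝔅, (C ∩ B).Nonempty) ∧
    ∀ C' ⊆ C, (∀ B ∈ 𝔅, (C' ∩ B).Nonempty) → C' = C

/-- A set of bases `𝔅` of the list `v` has the forward exchange property. -/
def forwardExchange (v : Fin N → M) (𝔅 : Set (Finset (Fin N))) : Prop :=
  ∀ B ∈ 𝔅, ∀ b ∈ B, ∀ j : Fin N,
    v j ∈ Submodule.span ℝ (v '' {e : Fin N | e ∈ B ∧ e ≤ b}) →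
    v j ∉ Submodule.span ℝ (v '' {e : Fin N | e ∈ B ∧ e < b}) →
    ¬ isExtActive v B j →
    insert j (B.erase b) ∈ 𝔅

end Lists

/-- The ideal `𝒥` generated by the cocircuit polynomials `p_C`. -/
def Jideal (X : Fin N → Fin r → ℝ) (G : Finset (Fin N)) (𝔅 : Set (Finset (Fin N))) :
    Ideal (MvPolynomial (Fin r) ℝ) :=
  Ideal.span {p | ∃ C : Finset (Fin N), isCocircuitOn G 𝔅 C ∧ p = prodPoly X C}

/-- The generalised `𝒟`-space: the kernel of the cocircuit ideal. -/
def Dspace (X : Fin N → Fin r → ℝ) (G : Finset (Fin N)) (𝔅 : Set (Finset (Fin N))) :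
    Submodule ℝ (MvPolynomial (Fin r) ℝ) :=
  kerIdeal (Jideal X G 𝔅)

/-- `Q_B := p_{X∖(B ∪ E(B))}` (within the ground set `G`). -/
def QB (X : Fin N → Fin r → ℝ) (G B : Finset (Fin N)) : MvPolynomial (Fin r) ℝ :=
  prodPoly X (G \ (B ∪ extSetOn X G B))

/-- The central `𝒫`-space: the span of `p_Y` over sublists `Y` of `G` whose complement spans. -/
def PspaceOn (X : Fin N → Fin r → ℝ) (G : Finset (Fin N)) :
    Submodule ℝ (MvPolynomial (Fin r) ℝ) :=
  Submodule.span ℝ {p | ∃ Y : Finset (Fin N), Y ⊆ G ∧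
    Submodule.span ℝ (X '' ((G \ Y : Finset (Fin N)) : Set (Fin N))) = ⊤ ∧ p = prodPoly X Y}

/-- The generalised `𝒫`-space `𝒫(X,𝔅') = span {Q_B : B ∈ 𝔅'}`. -/
def PspaceB (X : Fin N → Fin r → ℝ) (G : Finset (Fin N)) (𝔅 : Set (Finset (Fin N))) :
    Submodule ℝ (MvPolynomial (Fin r) ℝ) :=
  Submodule.span ℝ {p | ∃ B ∈ 𝔅, p = QB X G B}

/-- The directional derivative `D_u = ∑ i, uᵢ ∂/∂tᵢ` as a linear map. -/
def dirDeriv {r : ℕ} (u : Fin r → ℝ) :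
    MvPolynomial (Fin r) ℝ →ₗ[ℝ] MvPolynomial (Fin r) ℝ :=
  ∑ i, u i • (MvPolynomial.pderiv i).toLinearMap

end

/-- `𝒫(X/x)`, realised inside `Sym(ℝ^r/ℝx) ≅ ℝ[s₁,…,s_r]/(p_x)`: the span of the
images of the polynomials `p_Y` for sublists `Y` of `X∖x` such that `(X/x)∖Y` spans
the quotient space `ℝ^r/ℝx`. -/
noncomputable def PspaceContr {r N : ℕ} (X : Fin N → Fin r → ℝ) (i0 : Fin N) :
    Submodule ℝ (MvPolynomial (Fin r) ℝ ⧸ Ideal.span {linPoly (X i0)}) :=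
  Submodule.span ℝ {q | ∃ Y : Finset (Fin N), Y ⊆ Finset.univ.erase i0 ∧
    Submodule.span ℝ (((Submodule.span ℝ {X i0}).mkQ ∘ X) ''
      ((Finset.univ.erase i0 \ Y : Finset (Fin N)) : Set (Fin N))) = ⊤ ∧
    q = Ideal.Quotient.mk (Ideal.span {linPoly (X i0)}) (prodPoly X Y)}

/-!
Both maps are well defined on generators, and `Sym(π_x)` maps `𝒫(X)` onto `𝒫(X/x)` because a
sublist not containing `x` spans `ℝ^r` together with `x` iff its image spans `ℝ^r/ℝx`. The
substance is `ker Sym(π_x) ∩ 𝒫(X) ⊆ p_x · 𝒫(X∖x)`, obtained by comparing dimensions with the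
number `b(X)` of bases of `X`:
* `dim 𝒫(X) ≤ b(X)` by straightening: if `X∖Y` spans and some `j ∈ Y` is externally active for
  the lexicographically first basis `B` of `X∖Y`, expanding `x_j` in `B` rewrites `p_Y` through
  sublists of smaller index sum; otherwise `p_Y = Q_B`.
* `b(X) ≤ dim 𝒫(X)` by induction: `b(X) ≤ b(X∖x) + b(X/x)`, while `p_x · 𝒫(X∖x)` lies in the
  kernel and `𝒫(X/x)` in the image of `Sym(π_x)` on `𝒫(X)`, so by rank–nullity
  `dim 𝒫(X∖x) + dim 𝒫(X/x) ≤ dim 𝒫(X)`.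
Hence the kernel has dimension at most `b(X) - b(X/x) ≤ b(X∖x) = dim 𝒫(X∖x)`.
-/

open Submodule MvPolynomial Module

section Bases

variable {N : ℕ} {M : Type*} [AddCommGroup M] [Module ℝ M]

open Classical in
noncomputable def greedyBasis (v : Fin N → M) (T : Finset (Fin N)) : Finset (Fin N) :=
  T.filter fun j => v j ∉ span ℝ (v '' {e | e ∈ T ∧ e < j})

lemma mem_greedyBasis {v : Fin N → M} {T : Finset (Fin N)} {j : Fin N} :
    j ∈ greedyBasis v T ↔ j ∈ T ∧ v j ∉ span ℝ (v '' {e | e ∈ T ∧ e < j}) := by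
  classical
  simp [greedyBasis]

lemma greedyBasis_subset (v : Fin N → M) (T : Finset (Fin N)) : greedyBasis v T ⊆ T :=
  fun _ hj => (mem_greedyBasis.mp hj).1

lemma mem_span_greedyBasis {v : Fin N → M} {T : Finset (Fin N)} {j : Fin N} (hj : j ∈ T) :
    v j ∈ span ℝ (v '' {e | e ∈ greedyBasis v T ∧ e ≤ j}) := by
  induction j using WellFoundedLT.induction with
  | _ j ih =>
  by_cases hjB : j ∈ greedyBasis v T
  · exact subset_span (Set.mem_image_of_mem v ⟨hjB, le_rfl⟩)
  have hspan : v j ∈ span ℝ (v '' {e | e ∈ T ∧ e < j}) := by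
    by_contra h
    exact hjB (mem_greedyBasis.mpr ⟨hj, h⟩)
  refine span_le.mpr ?_ hspan
  rintro _ ⟨e, ⟨heT, hej⟩, rfl⟩
  exact span_mono (Set.image_mono fun f hf => by exact ⟨hf.1, hf.2.trans hej.le⟩) (ih e hej heT)

lemma span_greedyBasis (v : Fin N → M) (T : Finset (Fin N)) :
    span ℝ (v '' greedyBasis v T) = span ℝ (v '' T) := by
  refine le_antisymm (span_mono (Set.image_mono (by simpa using greedyBasis_subset v T))) ?_
  rw [span_le]
  rintro _ ⟨j, hj, rfl⟩
  exact span_mono (Set.image_mono fun e he => he.1) (mem_span_greedyBasis hj)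

lemma linearIndepOn_greedyBasis (v : Fin N → M) (T : Finset (Fin N)) :
    LinearIndepOn ℝ v (greedyBasis v T : Set (Fin N)) := by
  classical
  suffices ∀ S : Finset (Fin N), S ⊆ greedyBasis v T → LinearIndepOn ℝ v (S : Set (Fin N)) from
    this _ subset_rfl
  intro S
  induction S using Finset.induction_on_max with
  | empty => simp
  | insert a S hlt ih =>
    intro hS
    rw [Finset.insert_subset_iff] at hS
    rw [Finset.coe_insert, linearIndepOn_insert fun h => lt_irrefl a (hlt a h)]
    refine ⟨ih hS.2, fun h => (mem_greedyBasis.mp hS.1).2 (span_mono ?_ h)⟩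
    exact Set.image_mono fun e he => ⟨greedyBasis_subset v T (hS.2 he), hlt e he⟩

lemma greedyBasis_mem_basesOn {v : Fin N → M} {G T : Finset (Fin N)} (hTG : T ⊆ G)
    (hT : span ℝ (v '' T) = ⊤) : greedyBasis v T ∈ basesOn v G :=
  ⟨(greedyBasis_subset v T).trans hTG, linearIndepOn_greedyBasis v T,
    (span_greedyBasis v T).trans hT⟩

open Classical in
noncomputable def basesFinset (v : Fin N → M) (G : Finset (Fin N)) : Finset (Finset (Fin N)) :=
  G.powerset.filter (· ∈ basesOn v G)

lemma mem_basesFinset {v : Fin N → M} {G B : Finset (Fin N)} :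
    B ∈ basesFinset v G ↔ B ∈ basesOn v G := by
  classical
  simp only [basesFinset, Finset.mem_filter, Finset.mem_powerset, and_iff_right_iff_imp]
  exact fun h => h.1

end Bases

section LinPoly

variable {r : ℕ}

lemma linPoly_eq_sum_smul (u : Fin r → ℝ) : linPoly u = ∑ i, u i • X i := by
  simp [linPoly, smul_eq_C_mul]

noncomputable def linPolyₗ (r : ℕ) : (Fin r → ℝ) →ₗ[ℝ] MvPolynomial (Fin r) ℝ where
  toFun := linPoly
  map_add' u v := by simp [linPoly_eq_sum_smul, add_smul, Finset.sum_add_distrib]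
  map_smul' c u := by simp [linPoly_eq_sum_smul, Finset.smul_sum, smul_smul]

lemma linPolyₗ_apply (u : Fin r → ℝ) : linPolyₗ r u = linPoly u := rfl

@[simp]
lemma linPoly_zero : linPoly (0 : Fin r → ℝ) = 0 := by
  simp [linPoly]

lemma linPoly_single (i : Fin r) : linPoly (Pi.single i 1) = X i := by
  classical
  simp [linPoly_eq_sum_smul, Pi.single_apply]

lemma coeff_linPoly (u : Fin r → ℝ) (i : Fin r) : coeff (Finsupp.single i 1) (linPoly u) = u i := by
  classical
  simp [linPoly_eq_sum_smul, coeff_sum, coeff_X, Finsupp.single_left_inj]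

lemma linPoly_ne_zero {u : Fin r → ℝ} (hu : u ≠ 0) : linPoly u ≠ 0 := fun h =>
  hu (funext fun i => by simpa [h] using (coeff_linPoly u i).symm)

end LinPoly

section Straightening

variable {N r : ℕ} {M : Type*} [AddCommGroup M] [Module ℝ M]

lemma prodPoly_insert (X : Fin N → Fin r → ℝ) {Y : Finset (Fin N)} {e : Fin N} (he : e ∉ Y) :
    prodPoly X (insert e Y) = linPoly (X e) * prodPoly X Y :=
  Finset.prod_insert he

lemma linPoly_mul_prodPoly_erase (X : Fin N → Fin r → ℝ) {Y : Finset (Fin N)} {j : Fin N}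
    (hj : j ∈ Y) : linPoly (X j) * prodPoly X (Y.erase j) = prodPoly X Y :=
  Finset.mul_prod_erase _ _ hj

lemma prodPoly_eq_sum_exchange (X : Fin N → Fin r → ℝ) {Y : Finset (Fin N)} {j : Fin N}
    (hj : j ∈ Y) (l : Fin N →₀ ℝ) (hlY : Disjoint l.support Y)
    (hl : Finsupp.linearCombination ℝ X l = X j) :
    prodPoly X Y = ∑ e ∈ l.support, l e • prodPoly X (insert e (Y.erase j)) := by
  rw [← linPoly_mul_prodPoly_erase X hj, ← hl, ← linPolyₗ_apply,
    Finsupp.linearCombination_apply, Finsupp.sum, map_sum, Finset.sum_mul]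
  refine Finset.sum_congr rfl fun e he => ?_
  have heY : e ∉ Y.erase j := fun h => Finset.disjoint_left.mp hlY he (Finset.mem_of_mem_erase h)
  rw [prodPoly_insert X heY, map_smul, smul_mul_assoc, linPolyₗ_apply]

lemma span_exchange_eq_top {v : Fin N → M} {S : Finset (Fin N)} {j e : Fin N}
    (l : Fin N →₀ ℝ) (hlS : l.support ⊆ S) (hl : Finsupp.linearCombination ℝ v l = v j)
    (he : e ∈ l.support) (hS : span ℝ (v '' S) = ⊤) :
    span ℝ (v '' ↑(insert j (S.erase e))) = ⊤ := by
  set V := span ℝ (v '' ↑(insert j (S.erase e)))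
  have hmem : ∀ f ∈ S, f ≠ e → v f ∈ V := fun f hf hfe =>
    subset_span ⟨f, by simp [hf, hfe], rfl⟩
  have hve : v e ∈ V := by
    have hsplit : l e • v e = v j - ∑ f ∈ l.support.erase e, l f • v f := by
      rw [← hl, Finsupp.linearCombination_apply, Finsupp.sum, ← Finset.add_sum_erase _ _ he]
      abel
    rw [← smul_mem_iff V (Finsupp.mem_support_iff.mp he), hsplit]
    refine sub_mem (subset_span ⟨j, by simp, rfl⟩) (sum_mem fun f hf => smul_mem _ _ ?_)
    exact hmem f (hlS (Finset.mem_of_mem_erase hf)) (Finset.ne_of_mem_erase hf)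
  rw [eq_top_iff, ← hS, span_le]
  rintro _ ⟨f, hf, rfl⟩
  obtain rfl | hfe := eq_or_ne f e
  exacts [hve, hmem f hf hfe]

lemma sdiff_greedyBasis_union_extSetOn {v : Fin N → M} {G Y : Finset (Fin N)} (hYG : Y ⊆ G)
    (hY : ∀ j ∈ Y, ¬ isExtActive v (greedyBasis v (G \ Y)) j) :
    G \ (greedyBasis v (G \ Y) ∪ extSetOn v G (greedyBasis v (G \ Y))) = Y := by
  classical
  ext j
  have hB := greedyBasis_subset v (G \ Y)
  simp only [extSetOn, Finset.mem_sdiff, Finset.mem_union, Finset.mem_filter]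
  constructor
  · rintro ⟨hjG, hj⟩
    by_contra hjY
    by_cases hjB : j ∈ greedyBasis v (G \ Y)
    · exact hj (Or.inl hjB)
    · exact hj (Or.inr ⟨hjG, hjB, mem_span_greedyBasis (Finset.mem_sdiff.mpr ⟨hjG, hjY⟩)⟩)
  · intro hjY
    refine ⟨hYG hjY, ?_⟩
    rintro (hjB | ⟨-, hact⟩)
    · exact (Finset.mem_sdiff.mp (hB hjB)).2 hjY
    · exact hY j hjY hact

lemma prodPoly_mem_PspaceB {X : Fin N → Fin r → ℝ} {G Y : Finset (Fin N)} (hYG : Y ⊆ G)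
    (hY : span ℝ (X '' ↑(G \ Y)) = ⊤) : prodPoly X Y ∈ PspaceB X G (basesOn X G) := by
  induction hn : ∑ y ∈ Y, (y : ℕ) using Nat.strong_induction_on generalizing Y with
  | _ n ih =>
  set B := greedyBasis X (G \ Y)
  by_cases hact : ∃ j ∈ Y, isExtActive X B j
  swap
  · push Not at hact
    refine subset_span ⟨B, greedyBasis_mem_basesOn Finset.sdiff_subset hY, ?_⟩
    rw [QB, sdiff_greedyBasis_union_extSetOn hYG hact]
  -- Exchanging an externally active `j ∈ Y` for some `e < j` decreases `∑ Y`.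
  obtain ⟨j, hjY, -, hj⟩ := hact
  obtain ⟨l, hl, hlj⟩ := (Finsupp.mem_span_image_iff_linearCombination ℝ).mp hj
  have hlB : ∀ e ∈ l.support, e ∈ B ∧ e ≤ j := fun e he => hl he
  have hlS : l.support ⊆ G \ Y := fun e he => greedyBasis_subset X _ (hlB e he).1
  have hlY : Disjoint l.support Y := Finset.disjoint_of_subset_left hlS Finset.sdiff_disjoint
  rw [prodPoly_eq_sum_exchange X hjY l hlY hlj]
  refine sum_mem fun e he => smul_mem _ _ ?_
  have heY : e ∉ Y := Finset.disjoint_left.mp hlY he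
  have heG : e ∈ G := (Finset.mem_sdiff.mp (hlS he)).1
  have hej : (e : ℕ) < j := lt_of_le_of_ne (hlB e he).2 fun h => heY (Fin.ext h ▸ hjY)
  refine ih _ ?_ (Finset.insert_subset heG ((Finset.erase_subset _ _).trans hYG)) ?_ rfl
  · rw [Finset.sum_insert fun h => heY (Finset.mem_of_mem_erase h), ← hn,
      ← Finset.add_sum_erase _ _ hjY]
    omega
  · have hjG := hYG hjY
    have hsdiff : G \ insert e (Y.erase j) = insert j ((G \ Y).erase e) := by
      ext f
      simp only [Finset.mem_sdiff, Finset.mem_insert, Finset.mem_erase]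
      grind
    rw [hsdiff]
    exact span_exchange_eq_top l hlS hlj he hY

end Straightening

section UpperBound

variable {N r : ℕ}

lemma PspaceOn_le_PspaceB (X : Fin N → Fin r → ℝ) (G : Finset (Fin N)) :
    PspaceOn X G ≤ PspaceB X G (basesOn X G) :=
  span_le.mpr fun _ ⟨_, hYG, hY, hp⟩ => hp ▸ prodPoly_mem_PspaceB hYG hY

instance (X : Fin N → Fin r → ℝ) (G : Finset (Fin N)) : FiniteDimensional ℝ (PspaceOn X G) :=
  FiniteDimensional.span_of_finite ℝ <|
    (Set.finite_range (prodPoly X)).subset fun _ ⟨Y, _, _, hp⟩ => ⟨Y, hp.symm⟩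

theorem finrank_PspaceOn_le_card_basesFinset (X : Fin N → Fin r → ℝ) (G : Finset (Fin N)) :
    finrank ℝ (PspaceOn X G) ≤ (basesFinset X G).card := by
  classical
  have hB : PspaceB X G (basesOn X G) = span ℝ ↑((basesFinset X G).image (QB X G)) := by
    rw [PspaceB, Finset.coe_image]
    congr 1
    ext p
    simp [mem_basesFinset, eq_comm]
  calc finrank ℝ (PspaceOn X G)
      ≤ finrank ℝ (span ℝ ↑((basesFinset X G).image (QB X G))) :=
        Submodule.finrank_mono (hB ▸ PspaceOn_le_PspaceB X G)
    _ ≤ ((basesFinset X G).image (QB X G)).card := by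
        rw [← Set.finrank]; exact finrank_span_finset_le_card _
    _ ≤ (basesFinset X G).card := Finset.card_image_le

end UpperBound

section LinSubst

variable {r s N : ℕ}

/- For a surjection `A` with kernel `ℝ x`, this is `Sym(π_x)` written in coordinates
`ℝ^r / ℝ x ≅ ℝ^s`; see `linSubst_eq_zero_iff`. -/
noncomputable def linSubst (A : (Fin r → ℝ) →ₗ[ℝ] (Fin s → ℝ)) :
    MvPolynomial (Fin r) ℝ →ₐ[ℝ] MvPolynomial (Fin s) ℝ :=
  aeval fun i => linPoly (A (Pi.single i 1))

lemma linSubst_linPoly (A : (Fin r → ℝ) →ₗ[ℝ] (Fin s → ℝ)) (u : Fin r → ℝ) :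
    linSubst A (linPoly u) = linPoly (A u) := by
  classical
  conv_rhs => rw [pi_eq_sum_univ' u]
  simp [linPoly_eq_sum_smul u, linSubst, ← linPolyₗ_apply, map_sum, map_smul]

lemma linSubst_prodPoly (A : (Fin r → ℝ) →ₗ[ℝ] (Fin s → ℝ)) (X : Fin N → Fin r → ℝ)
    (Y : Finset (Fin N)) : linSubst A (prodPoly X Y) = prodPoly (A ∘ X) Y := by
  simp [prodPoly, map_prod, linSubst_linPoly]

theorem linSubst_eq_zero_iff {A : (Fin r → ℝ) →ₗ[ℝ] (Fin s → ℝ)} (hA : Function.Surjective A)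
    {x : Fin r → ℝ} (hker : LinearMap.ker A = span ℝ {x}) (p : MvPolynomial (Fin r) ℝ) :
    linSubst A p = 0 ↔ linPoly x ∣ p := by
  constructor
  swap
  · rintro ⟨q, rfl⟩
    have hx : A x = 0 := LinearMap.mem_ker.mp (hker ▸ mem_span_singleton_self x)
    rw [map_mul, linSubst_linPoly, hx, linPoly_zero, zero_mul]
  obtain ⟨S, hS⟩ := A.exists_rightInverse_of_surjective (LinearMap.range_eq_top.mpr hA)
  set mk := Ideal.Quotient.mkₐ ℝ (Ideal.span {linPoly x})
  -- `S ∘ A` is the identity modulo `ℝ x`, so substituting back recovers `p` modulo `p_x`.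
  have hsection : (mk.comp (linSubst S)).comp (linSubst A) = mk := by
    refine MvPolynomial.algHom_ext fun i => ?_
    have hdiff : S (A (Pi.single i 1)) - Pi.single i 1 ∈ span ℝ {x} := by
      rw [← hker, LinearMap.mem_ker, map_sub, ← LinearMap.comp_apply A S, hS]
      simp
    obtain ⟨c, hc⟩ := mem_span_singleton.mp hdiff
    simp only [AlgHom.comp_apply, ← linPoly_single, linSubst_linPoly]
    refine (Ideal.Quotient.mk_eq_mk_iff_sub_mem _ _).mpr (Ideal.mem_span_singleton.mpr ⟨C c, ?_⟩)
    rw [← linPolyₗ_apply, ← linPolyₗ_apply, ← map_sub, ← hc, map_smul, linPolyₗ_apply,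
      smul_eq_C_mul, mul_comm]
  intro hp
  rw [← Ideal.mem_span_singleton, ← Ideal.Quotient.eq_zero_iff_mem, ← Ideal.Quotient.mkₐ_eq_mk ℝ,
    ← AlgHom.congr_fun hsection p]
  simp [hp]

theorem exists_surjective_ker_eq_span_singleton {x : Fin r → ℝ} (hx : x ≠ 0) :
    ∃ W : (Fin r → ℝ) →ₗ[ℝ] (Fin (r - 1) → ℝ),
      Function.Surjective W ∧ LinearMap.ker W = span ℝ {x} := by
  have hrank := (span ℝ {x}).finrank_quotient_add_finrank
  rw [finrank_span_singleton hx, finrank_fin_fun] at hrank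
  let e := LinearEquiv.ofFinrankEq ((Fin r → ℝ) ⧸ span ℝ {x}) (Fin (r - 1) → ℝ)
    (by rw [finrank_fin_fun]; omega)
  refine ⟨e.toLinearMap ∘ₗ (span ℝ {x}).mkQ, e.surjective.comp (span ℝ {x}).mkQ_surjective, ?_⟩
  rw [LinearMap.ker_comp, LinearEquiv.ker, comap_bot, ker_mkQ]

end LinSubst

section DeletionContraction

variable {N : ℕ} {M M' : Type*} [AddCommGroup M] [Module ℝ M] [AddCommGroup M'] [Module ℝ M']

lemma span_comp_image_eq_top {W : M →ₗ[ℝ] M'} (hW : Function.Surjective W) {v : Fin N → M}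
    {S : Set (Fin N)} (hS : span ℝ (v '' S) = ⊤) : span ℝ ((W ∘ v) '' S) = ⊤ := by
  rw [Set.image_comp, ← map_span, hS, Submodule.map_top, LinearMap.range_eq_top.mpr hW]

lemma erase_mem_basesOn_comp {v : Fin N → M} {G B : Finset (Fin N)} {i : Fin N}
    (hB : B ∈ basesOn v G) (hiB : i ∈ B) {W : M →ₗ[ℝ] M'} (hW : Function.Surjective W)
    (hker : LinearMap.ker W = span ℝ {v i}) : B.erase i ∈ basesOn (W ∘ v) (G.erase i) := by
  obtain ⟨hBG, hli, hspan⟩ := hB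
  have hBi : (B : Set (Fin N)) = insert i ↑(B.erase i) := by simp [hiB]
  refine ⟨Finset.erase_subset_erase i hBG, ?_, ?_⟩
  · have hli' : LinearIndepOn ℝ v (insert i ↑(B.erase i)) := hBi ▸ hli
    rw [linearIndepOn_insert (by simp)] at hli'
    refine hli'.1.map_injOn W (W.injOn_of_disjoint_ker subset_rfl ?_)
    rw [hker]
    exact disjoint_span_singleton_of_notMem hli'.2
  · have hWi : W (v i) = 0 := LinearMap.mem_ker.mp (hker ▸ mem_span_singleton_self (v i))
    have hspan' := span_comp_image_eq_top hW hspan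
    rwa [hBi, Set.image_insert_eq, Function.comp_apply, hWi, span_insert_zero] at hspan'

theorem card_basesFinset_le_add {v : Fin N → M} (G : Finset (Fin N)) (i : Fin N)
    {W : M →ₗ[ℝ] M'} (hW : Function.Surjective W) (hker : LinearMap.ker W = span ℝ {v i}) :
    (basesFinset v G).card ≤
      (basesFinset v (G.erase i)).card + (basesFinset (W ∘ v) (G.erase i)).card := by
  classical
  rw [← Finset.card_filter_add_card_filter_not (p := fun B => i ∉ B)]
  refine add_le_add (Finset.card_le_card fun B hB => ?_) ?_
  · rw [Finset.mem_filter, mem_basesFinset] at hB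
    obtain ⟨⟨hBG, hli, hspan⟩, hiB⟩ := hB
    refine mem_basesFinset.mpr ⟨fun e he => ?_, hli, hspan⟩
    exact Finset.mem_erase.mpr ⟨fun h => hiB (h ▸ he), hBG he⟩
  · refine Finset.card_le_card_of_injOn (fun B : Finset (Fin N) => B.erase i) (fun B hB => ?_)
      fun B₁ hB₁ B₂ hB₂ h => ?_
    · rw [Finset.mem_coe, Finset.mem_filter, mem_basesFinset, not_not] at hB
      exact mem_basesFinset.mpr (erase_mem_basesOn_comp hB.1 hB.2 hW hker)
    · simp only [Finset.coe_filter, not_not, Set.mem_ofPred_eq] at hB₁ hB₂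
      rw [← Finset.insert_erase hB₁.2, ← Finset.insert_erase hB₂.2]
      exact congrArg (insert i) h

end DeletionContraction

lemma finrank_inf_ker_add_finrank_map {K V V' : Type*} [Field K] [AddCommGroup V] [Module K V]
    [AddCommGroup V'] [Module K V'] (f : V →ₗ[K] V') (P : Submodule K V) [FiniteDimensional K P] :
    finrank K ↥(P ⊓ LinearMap.ker f) + finrank K ↥(P.map f) = finrank K P := by
  rw [← LinearMap.range_domRestrict, ← (f.domRestrict P).finrank_range_add_finrank_ker, add_comm,
    LinearMap.ker_domRestrict, ← map_comap_subtype]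
  congr 1
  exact (equivMapOfInjective _ P.injective_subtype _).finrank_eq.symm

section PspaceDeletionContraction

variable {N r s : ℕ} (X : Fin N → Fin r → ℝ) {G : Finset (Fin N)} {i : Fin N}

lemma map_mulLeft_PspaceOn_le (hi : i ∈ G) :
    (PspaceOn X (G.erase i)).map (LinearMap.mulLeft ℝ (linPoly (X i))) ≤ PspaceOn X G := by
  rw [map_le_iff_le_comap, PspaceOn, span_le]
  rintro _ ⟨Y, hY, hspan, rfl⟩
  have hiY : i ∉ Y := fun h => by simpa using hY h
  refine subset_span ⟨insert i Y, Finset.insert_subset hi (hY.trans (Finset.erase_subset _ _)),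
    ?_, (prodPoly_insert X hiY).symm⟩
  rwa [Finset.sdiff_insert, ← Finset.erase_sdiff_comm]

lemma map_mulLeft_PspaceOn_le_inf_ker (hi : i ∈ G) {W : (Fin r → ℝ) →ₗ[ℝ] (Fin s → ℝ)}
    (hWi : W (X i) = 0) :
    (PspaceOn X (G.erase i)).map (LinearMap.mulLeft ℝ (linPoly (X i))) ≤
      PspaceOn X G ⊓ LinearMap.ker (linSubst W).toLinearMap := by
  refine le_inf (map_mulLeft_PspaceOn_le X hi) (map_le_iff_le_comap.mpr fun p _ => ?_)
  rw [Submodule.mem_comap, LinearMap.mem_ker, LinearMap.mulLeft_apply, AlgHom.toLinearMap_apply,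
    map_mul, linSubst_linPoly, hWi, linPoly_zero, zero_mul]

lemma finrank_map_mulLeft_linPoly {x : Fin r → ℝ} (hx : x ≠ 0)
    (P : Submodule ℝ (MvPolynomial (Fin r) ℝ)) :
    finrank ℝ (P.map (LinearMap.mulLeft ℝ (linPoly x))) = finrank ℝ P :=
  (equivMapOfInjective _ (mul_right_injective₀ (linPoly_ne_zero hx)) P).finrank_eq.symm

lemma PspaceOn_comp_le_map_linSubst (hi : i ∈ G) {W : (Fin r → ℝ) →ₗ[ℝ] (Fin s → ℝ)}
    (hker : LinearMap.ker W ≤ span ℝ {X i}) :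
    PspaceOn (W ∘ X) (G.erase i) ≤ (PspaceOn X G).map (linSubst W).toLinearMap := by
  rw [PspaceOn, span_le]
  rintro _ ⟨Y, hY, hspan, rfl⟩
  refine ⟨prodPoly X Y, subset_span ⟨Y, hY.trans (Finset.erase_subset _ _), ?_, rfl⟩,
    linSubst_prodPoly W X Y⟩
  set V := span ℝ (X '' ↑(G \ Y))
  have hiY : i ∈ G \ Y := Finset.mem_sdiff.mpr ⟨hi, fun h => by simpa using hY h⟩
  have hkerV : LinearMap.ker W ≤ V :=
    hker.trans (span_le.mpr (Set.singleton_subset_iff.mpr (subset_span ⟨i, hiY, rfl⟩)))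
  have hmap : V.map W = ⊤ := by
    rw [eq_top_iff, ← hspan, Set.image_comp, ← map_span]
    exact map_mono (span_mono (Set.image_mono (Finset.coe_subset.mpr
      (Finset.sdiff_subset_sdiff (Finset.erase_subset _ _) subset_rfl))))
  have hcomap := congrArg (comap W) hmap
  rwa [comap_map_eq, comap_top, sup_eq_left.mpr hkerV] at hcomap

lemma finrank_inf_ker_add_finrank_PspaceOn_comp_le (hi : i ∈ G)
    {W : (Fin r → ℝ) →ₗ[ℝ] (Fin s → ℝ)} (hker : LinearMap.ker W ≤ span ℝ {X i}) :
    finrank ℝ ↥(PspaceOn X G ⊓ LinearMap.ker (linSubst W).toLinearMap) +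
      finrank ℝ (PspaceOn (W ∘ X) (G.erase i)) ≤ finrank ℝ (PspaceOn X G) := by
  rw [← finrank_inf_ker_add_finrank_map (linSubst W).toLinearMap (PspaceOn X G)]
  gcongr
  exact Submodule.finrank_mono (PspaceOn_comp_le_map_linSubst X hi hker)

end PspaceDeletionContraction

section LowerBound

variable {N : ℕ}

lemma card_basesFinset_le_one {M : Type*} [AddCommGroup M] [Module ℝ M] {v : Fin N → M}
    {G : Finset (Fin N)} (h : ∀ i ∈ G, v i ≠ 0 → span ℝ (v '' ↑(G.erase i)) ≠ ⊤) :
    (basesFinset v G).card ≤ 1 := by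
  classical
  have hcoloops : ∀ B ∈ basesFinset v G,
      B = G.filter fun i => span ℝ (v '' ↑(G.erase i)) ≠ ⊤ := by
    intro B hB
    obtain ⟨hBG, hli, hspan⟩ := mem_basesFinset.mp hB
    ext i
    rw [Finset.mem_filter]
    refine ⟨fun hiB => ⟨hBG hiB, h i (hBG hiB) (LinearIndepOn.ne_zero hli hiB)⟩,
      fun ⟨hiG, hi⟩ => ?_⟩
    by_contra hiB
    refine hi (eq_top_iff.mpr (hspan ▸ span_mono (Set.image_mono fun e he => ?_)))
    exact Finset.mem_erase.mpr ⟨fun h => hiB (h ▸ he), hBG he⟩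
  exact Finset.card_le_one.mpr fun B₁ h₁ B₂ h₂ => (hcoloops B₁ h₁).trans (hcoloops B₂ h₂).symm

lemma one_mem_PspaceOn {r : ℕ} {X : Fin N → Fin r → ℝ} {G : Finset (Fin N)}
    (hG : span ℝ (X '' ↑G) = ⊤) : 1 ∈ PspaceOn X G :=
  subset_span ⟨∅, Finset.empty_subset G, by simpa using hG, by simp [prodPoly]⟩

theorem card_basesFinset_le_finrank_PspaceOn {r : ℕ} (X : Fin N → Fin r → ℝ) (G : Finset (Fin N))
    (hG : span ℝ (X '' ↑G) = ⊤) : (basesFinset X G).card ≤ finrank ℝ (PspaceOn X G) := by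
  induction G using Finset.strongInduction generalizing r with
  | H G ih =>
  by_cases hdel : ∃ i ∈ G, X i ≠ 0 ∧ span ℝ (X '' ↑(G.erase i)) = ⊤
  swap
  · push Not at hdel
    refine (card_basesFinset_le_one hdel).trans (Submodule.one_le_finrank_iff.mpr ?_)
    exact (Submodule.ne_bot_iff _).mpr ⟨1, one_mem_PspaceOn hG, one_ne_zero⟩
  obtain ⟨i, hi, hx, hGi⟩ := hdel
  obtain ⟨W, hW, hker⟩ := exists_surjective_ker_eq_span_singleton hx
  have hWi : W (X i) = 0 := LinearMap.mem_ker.mp (hker ▸ mem_span_singleton_self (X i))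
  calc (basesFinset X G).card
      ≤ (basesFinset X (G.erase i)).card + (basesFinset (W ∘ X) (G.erase i)).card :=
        card_basesFinset_le_add G i hW hker
    _ ≤ finrank ℝ (PspaceOn X (G.erase i)) + finrank ℝ (PspaceOn (W ∘ X) (G.erase i)) :=
        add_le_add (ih _ (Finset.erase_ssubset hi) X hGi)
          (ih _ (Finset.erase_ssubset hi) _ (span_comp_image_eq_top hW hGi))
    _ ≤ finrank ℝ ↥(PspaceOn X G ⊓ LinearMap.ker (linSubst W).toLinearMap) +
          finrank ℝ (PspaceOn (W ∘ X) (G.erase i)) := by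
        rw [← finrank_map_mulLeft_linPoly hx]
        gcongr
        exact Submodule.finrank_mono (map_mulLeft_PspaceOn_le_inf_ker X hi hWi)
    _ ≤ finrank ℝ (PspaceOn X G) := finrank_inf_ker_add_finrank_PspaceOn_comp_le X hi hker.le

end LowerBound

section Exactness

variable {N r : ℕ}

theorem PspaceOn_inf_ker_linSubst (X : Fin N → Fin r → ℝ) {G : Finset (Fin N)} {i : Fin N}
    (hi : i ∈ G) (hx : X i ≠ 0) {s : ℕ} {W : (Fin r → ℝ) →ₗ[ℝ] (Fin s → ℝ)}
    (hW : Function.Surjective W) (hker : LinearMap.ker W = span ℝ {X i})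
    (hGi : span ℝ (X '' ↑(G.erase i)) = ⊤) :
    PspaceOn X G ⊓ LinearMap.ker (linSubst W).toLinearMap =
      (PspaceOn X (G.erase i)).map (LinearMap.mulLeft ℝ (linPoly (X i))) := by
  have hWi : W (X i) = 0 := LinearMap.mem_ker.mp (hker ▸ mem_span_singleton_self (X i))
  refine (eq_of_le_of_finrank_le (map_mulLeft_PspaceOn_le_inf_ker X hi hWi) ?_).symm
  have hrank := finrank_inf_ker_add_finrank_PspaceOn_comp_le X hi hker.le
  have hupper := finrank_PspaceOn_le_card_basesFinset X G
  have hsplit := card_basesFinset_le_add (v := X) G i hW hker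
  have hdel := card_basesFinset_le_finrank_PspaceOn X _ hGi
  have hcontr := card_basesFinset_le_finrank_PspaceOn (W ∘ X) _ (span_comp_image_eq_top hW hGi)
  rw [finrank_map_mulLeft_linPoly hx]
  omega

lemma span_mkQ_image_eq_top_iff {ι M : Type*} [AddCommGroup M] [Module ℝ M] (v : ι → M) (i : ι)
    (S : Set ι) : span ℝ (((span ℝ {v i}).mkQ ∘ v) '' S) = ⊤ ↔ span ℝ (v '' insert i S) = ⊤ := by
  rw [Set.image_comp, ← map_span, map_mkQ_eq_top, Set.image_insert_eq, span_insert]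

theorem map_mk_PspaceOn_univ (X : Fin N → Fin r → ℝ) (i : Fin N) :
    (PspaceOn X Finset.univ).map (Ideal.Quotient.mkₐ ℝ (Ideal.span {linPoly (X i)})).toLinearMap =
      PspaceContr X i := by
  have hcoe : ∀ Y : Finset (Fin N), i ∉ Y →
      insert i ↑(Finset.univ.erase i \ Y) = (↑(Finset.univ \ Y) : Set (Fin N)) := by
    intro Y hiY
    ext j
    by_cases hj : j = i <;> simp [hj, hiY]
  rw [PspaceOn, map_span, PspaceContr]
  apply le_antisymm <;> rw [span_le]
  · rintro _ ⟨_, ⟨Y, -, hY, rfl⟩, rfl⟩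
    by_cases hiY : i ∈ Y
    · have hzero : Ideal.Quotient.mk (Ideal.span {linPoly (X i)}) (prodPoly X Y) = 0 := by
        rw [Ideal.Quotient.eq_zero_iff_mem, Ideal.mem_span_singleton,
          ← linPoly_mul_prodPoly_erase X hiY]
        exact dvd_mul_right _ _
      simp [hzero]
    · have hYi : Y ⊆ Finset.univ.erase i := fun j hj => Finset.mem_erase.mpr
        ⟨fun h => hiY (h ▸ hj), Finset.mem_univ j⟩
      exact subset_span ⟨Y, hYi, (span_mkQ_image_eq_top_iff X i _).mpr (by rwa [hcoe Y hiY]), rfl⟩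
  · rintro _ ⟨Y, hY, hspan, rfl⟩
    have hiY : i ∉ Y := fun h => by simpa using hY h
    rw [span_mkQ_image_eq_top_iff, hcoe Y hiY] at hspan
    exact subset_span ⟨prodPoly X Y, ⟨Y, Finset.subset_univ Y, hspan, rfl⟩, rfl⟩

end Exactness

theorem statement7_general {r N : ℕ} (X : Fin N → Fin r → ℝ)
    (i0 : Fin N)
    (hloop : X i0 ≠ 0)
    (hcoloop : Submodule.span ℝ
      (X '' ((Finset.univ.erase i0 : Finset (Fin N)) : Set (Fin N))) = ⊤) :
    (∀ p ∈ PspaceOn X (Finset.univ.erase i0),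
      linPoly (X i0) * p ∈ PspaceOn X Finset.univ) ∧
    (∀ p ∈ PspaceOn X (Finset.univ.erase i0), linPoly (X i0) * p = 0 → p = 0) ∧
    (∀ p ∈ PspaceOn X Finset.univ,
      Ideal.Quotient.mk (Ideal.span {linPoly (X i0)}) p ∈ PspaceContr X i0) ∧
    (∀ q ∈ PspaceContr X i0, ∃ p ∈ PspaceOn X Finset.univ,
      Ideal.Quotient.mk (Ideal.span {linPoly (X i0)}) p = q) ∧
    (∀ p ∈ PspaceOn X Finset.univ,
      (Ideal.Quotient.mk (Ideal.span {linPoly (X i0)}) p = 0 ↔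
        ∃ g ∈ PspaceOn X (Finset.univ.erase i0), p = linPoly (X i0) * g)) := by
  obtain ⟨W, hW, hker⟩ := exists_surjective_ker_eq_span_singleton hloop
  have hmap := map_mk_PspaceOn_univ X i0
  have hexact := PspaceOn_inf_ker_linSubst X (Finset.mem_univ i0) hloop hW hker hcoloop
  refine ⟨fun p hp => map_mulLeft_PspaceOn_le X (Finset.mem_univ i0) (mem_map_of_mem hp),
    fun p _ h => (mul_eq_zero.mp h).resolve_left (linPoly_ne_zero hloop),
    fun p hp => hmap ▸ mem_map_of_mem hp, fun q hq => ?_, fun p hp => ?_⟩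
  · obtain ⟨p, hp, rfl⟩ := mem_map.mp (hmap ▸ hq)
    exact ⟨p, hp, rfl⟩
  · rw [Ideal.Quotient.eq_zero_iff_mem, Ideal.mem_span_singleton, ← linSubst_eq_zero_iff hW hker]
    have := SetLike.ext_iff.mp hexact p
    simpa [hp, eq_comm] using this

/-- for `x ∈ X` neither a loop nor a coloop, the sequence
`0 → 𝒫(X∖x) → 𝒫(X) → 𝒫(X/x) → 0` (multiplication by `p_x`, then `Sym(π_x)`,
the latter realised as the quotient map `ℝ[s] → ℝ[s]/(p_x) ≅ Sym(ℝ^r/ℝx)`)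
is exact. -/
theorem statement7 {r N : ℕ} (X : Fin N → Fin r → ℝ)
    (hX : Submodule.span ℝ (Set.range X) = ⊤) (i0 : Fin N)
    (hloop : X i0 ≠ 0)
    (hcoloop : Submodule.span ℝ
      (X '' ((Finset.univ.erase i0 : Finset (Fin N)) : Set (Fin N))) = ⊤) :
    (∀ p ∈ PspaceOn X (Finset.univ.erase i0),
      linPoly (X i0) * p ∈ PspaceOn X Finset.univ) ∧
    (∀ p ∈ PspaceOn X (Finset.univ.erase i0), linPoly (X i0) * p = 0 → p = 0) ∧
    (∀ p ∈ PspaceOn X Finset.univ,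
      Ideal.Quotient.mk (Ideal.span {linPoly (X i0)}) p ∈ PspaceContr X i0) ∧
    (∀ q ∈ PspaceContr X i0, ∃ p ∈ PspaceOn X Finset.univ,
      Ideal.Quotient.mk (Ideal.span {linPoly (X i0)}) p = q) ∧
    (∀ p ∈ PspaceOn X Finset.univ,
      (Ideal.Quotient.mk (Ideal.span {linPoly (X i0)}) p = 0 ↔
        ∃ g ∈ PspaceOn X (Finset.univ.erase i0), p = linPoly (X i0) * g)) :=
  statement7_general X i0 hloop hcoloop
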